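/- arXiv:2111.15465 — 2 statements merged into one kernel-verified Lean document; each statement's English description precedes it below -/
import Mathlib

section
/- Let 0 < a_1 ≤ ... ≤ a_n with a_1^{a_n} ≥ e^{-1}, and suppose 1 ≤ i < k ≤ n and 1 ≤ j < l ≤ n. Then a_i^{a_j} + a_k^{a_l} ≥ a_i^{a_l} + a_k^{a_j}. -/
/-!
Write `x = a_i ≤ y = a_k` and `p = a_j ≤ q = a_l`; the claim is that `t ↦ y ^ t - x ^ t` is
monotone on `[p, q]`. Its derivative `y ^ t log y - x ^ t log x` is nonnegative because
`u ↦ u ^ t log u` has derivative `u ^ (t - 1) (t log u + 1)`, and the hypothesis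
`a_1 ^ a_n ≥ e⁻¹`, i.e. `a_n log a_1 ≥ -1`, forces `t log u ≥ -1` for all relevant `t` and `u`.
-/

open Real Set

lemma neg_one_le_mul_log_of_le {x' x t T : ℝ} (hx' : 0 < x') (hx : x' ≤ x) (ht : 0 ≤ t)
    (htT : t ≤ T) (h : -1 ≤ T * log x') : -1 ≤ t * log x := by
  have hlog : log x' ≤ log x := log_le_log hx' hx
  rcases le_or_gt 0 (log x) with hpos | hneg
  · nlinarith
  · nlinarith

lemma monotoneOn_rpow_mul_log {x t : ℝ} (hx : 0 < x) (ht : 0 ≤ t) (h : -1 ≤ t * log x) :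
    MonotoneOn (fun u : ℝ => u ^ t * log u) (Ici x) := by
  have hderiv : ∀ u, 0 < u →
      HasDerivAt (fun u : ℝ => u ^ t * log u) (u ^ (t - 1) * (t * log u + 1)) u := by
    intro u hu
    refine ((hasDerivAt_rpow_const (p := t) (Or.inl hu.ne')).mul
      (hasDerivAt_log hu.ne')).congr_deriv ?_
    rw [rpow_sub_one hu.ne']
    field_simp
  refine monotoneOn_of_hasDerivWithinAt_nonneg (convex_Ici x)
    (fun u hu => (hderiv u (hx.trans_le hu)).continuousAt.continuousWithinAt)
    (fun u hu => (hderiv u (hx.trans (by simpa using hu))).hasDerivWithinAt) ?_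
  intro u hu
  rw [interior_Ici] at hu
  have hu0 : 0 < u := hx.trans hu
  have := neg_one_le_mul_log_of_le hx hu.le ht le_rfl h
  exact mul_nonneg (rpow_nonneg hu0.le _) (by linarith)

lemma monotoneOn_rpow_sub_rpow {x y q : ℝ} (hx : 0 < x) (hxy : x ≤ y) (h : -1 ≤ q * log x) :
    MonotoneOn (fun t : ℝ => y ^ t - x ^ t) (Icc 0 q) := by
  have hy : 0 < y := hx.trans_le hxy
  have hderiv : ∀ t, HasDerivAt (fun t : ℝ => y ^ t - x ^ t)
      (y ^ t * log y - x ^ t * log x) t := fun t =>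
    (hasStrictDerivAt_const_rpow hy t).hasDerivAt.sub (hasStrictDerivAt_const_rpow hx t).hasDerivAt
  refine monotoneOn_of_hasDerivWithinAt_nonneg (convex_Icc 0 q)
    (fun t _ => (hderiv t).continuousAt.continuousWithinAt)
    (fun t _ => (hderiv t).hasDerivWithinAt) ?_
  intro t ht
  rw [interior_Icc] at ht
  have htx := neg_one_le_mul_log_of_le hx le_rfl ht.1.le ht.2.le h
  exact sub_nonneg.2 (monotoneOn_rpow_mul_log hx ht.1.le htx self_mem_Ici hxy hxy)

lemma rpow_add_rpow_le_of_neg_one_le_mul_log {x y p q : ℝ} (hx : 0 < x) (hxy : x ≤ y)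
    (hp : 0 ≤ p) (hpq : p ≤ q) (h : -1 ≤ q * log x) :
    x ^ q + y ^ p ≤ x ^ p + y ^ q := by
  have := monotoneOn_rpow_sub_rpow hx hxy h ⟨hp, hpq⟩ ⟨hp.trans hpq, le_rfl⟩ hpq
  simp only at this
  linarith

theorem stmt_4 (n : ℕ) (hn : 2 ≤ n) (a : Fin n → ℝ)
    (hpos : ∀ i, 0 < a i) (hmono : Monotone a)
    (hC : a ⟨0, by omega⟩ ^ a ⟨n - 1, by omega⟩ ≥ Real.exp (-1))
    (i k j l : Fin n) (hik : i < k) (hjl : j < l) :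
    a i ^ a l + a k ^ a j ≤ a i ^ a j + a k ^ a l := by
  have hC' : -1 ≤ a ⟨n - 1, by omega⟩ * log (a ⟨0, by omega⟩) := by
    have := log_le_log (exp_pos _) hC
    rwa [log_exp, log_rpow (hpos _)] at this
  have hlog : -1 ≤ a l * log (a i) :=
    neg_one_le_mul_log_of_le (hpos _) (hmono (Fin.le_def.2 (Nat.zero_le _))) (hpos l).le
      (hmono (Fin.le_def.2 (by simp only; omega))) hC'
  exact rpow_add_rpow_le_of_neg_one_le_mul_log (hpos i) (hmono hik.le) (hpos j).le
    (hmono hjl.le) hlog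
end

section
/- If 0 < x ≤ z ≤ y < 1, then y^y + z^x ≥ z^y + y^x, with equality if and only if y = z. -/
/-!
The map `s ↦ s ^ y - s ^ x` is strictly increasing on `[x, ∞)` when `0 < x < y ≤ 1`, and the
claim is `f z < f y` for `z < y`. Its derivative is `t ^ (x - 1) * (y * t ^ (y - x) - x)`, and
`y * t ^ (y - x) > y * x ^ (y - x) ≥ x` for `t > x`; the last inequality is Bernoulli's
inequality `x ^ (1 + x - y) ≤ 1 + (1 + x - y) * (x - 1) ≤ y`.
-/

open Real Set

lemma rpow_one_add_sub_le {x y : ℝ} (hx : 0 ≤ x) (hxy : x ≤ y) (hy : y ≤ 1) :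
    x ^ (1 + x - y) ≤ y := by
  have bernoulli := rpow_one_add_le_one_add_mul_self (s := x - 1) (by linarith)
    (p := 1 + x - y) (by linarith) (by linarith)
  rw [add_sub_cancel] at bernoulli
  nlinarith

lemma le_mul_rpow_sub {x y : ℝ} (hx : 0 < x) (hxy : x ≤ y) (hy : y ≤ 1) :
    x ≤ y * x ^ (y - x) :=
  calc x = x ^ (1 + x - y) * x ^ (y - x) := by rw [← rpow_add hx]; ring_nf; exact (rpow_one x).symm
    _ ≤ y * x ^ (y - x) := by gcongr; exact rpow_one_add_sub_le hx.le hxy hy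

lemma mul_rpow_sub_one_lt {x y t : ℝ} (hx : 0 < x) (hxy : x < y) (hy : y ≤ 1) (ht : x < t) :
    x * t ^ (x - 1) < y * t ^ (y - 1) := by
  have ht0 : 0 < t := hx.trans ht
  have hpow : x < y * t ^ (y - x) :=
    calc x ≤ y * x ^ (y - x) := le_mul_rpow_sub hx hxy.le hy
      _ < y * t ^ (y - x) := by gcongr; linarith
  calc x * t ^ (x - 1) < y * t ^ (y - x) * t ^ (x - 1) := by gcongr
    _ = y * t ^ (y - 1) := by rw [mul_assoc, ← rpow_add ht0]; ring_nf

lemma strictMonoOn_rpow_sub_rpow {x y : ℝ} (hx : 0 < x) (hxy : x < y) (hy : y ≤ 1) :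
    StrictMonoOn (fun s : ℝ ↦ s ^ y - s ^ x) (Ici x) := by
  have hne : ∀ t ∈ Ici x, t ≠ 0 := fun t ht ↦ (hx.trans_le ht).ne'
  apply strictMonoOn_of_deriv_pos (convex_Ici x)
  · exact (continuousOn_id.rpow_const fun t ht ↦ .inl (hne t ht)).sub
      (continuousOn_id.rpow_const fun t ht ↦ .inl (hne t ht))
  · intro t ht
    rw [interior_Ici] at ht
    have ht0 : t ≠ 0 := (hx.trans ht).ne'
    have hderiv : HasDerivAt (fun s : ℝ ↦ s ^ y - s ^ x) (y * t ^ (y - 1) - x * t ^ (x - 1)) t :=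
      (hasDerivAt_rpow_const (.inl ht0)).sub (hasDerivAt_rpow_const (.inl ht0))
    rw [hderiv.deriv]
    exact sub_pos.2 (mul_rpow_sub_one_lt hx hxy hy ht)

theorem stmt_11 (x y z : ℝ) (hx : 0 < x) (hxz : x ≤ z) (hzy : z ≤ y) (hy : y < 1) :
    z ^ y + y ^ x ≤ y ^ y + z ^ x ∧ (y ^ y + z ^ x = z ^ y + y ^ x ↔ y = z) := by
  rcases hzy.eq_or_lt with rfl | hzy
  · simp
  · have hlt : z ^ y - z ^ x < y ^ y - y ^ x :=
      strictMonoOn_rpow_sub_rpow hx (hxz.trans_lt hzy) hy.le hxz (hxz.trans hzy.le) hzy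
    exact ⟨by linarith, ⟨fun h ↦ by linarith, fun h ↦ absurd h hzy.ne'⟩⟩
end
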